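/- Let X ∈ ℝ^{n×p} with Σ = XᵀX/n, let S ⊆ {1,…,p} with |S| = s be such that Σ_{SS} is invertible with smallest eigenvalue φ_min(S). Then for every j ∈ S and every β*_j ∈ ℝ, ‖(Π_S − Π_{S∖{j}}) X_j β*_j‖₂ ≥ √n · φ_min(S)^{1/2} · |β*_j|; equivalently, ‖X_j − Π_{S∖{j}} X_j‖₂² = ‖X_j‖₂² − ‖Π_{S∖{j}} X_j‖₂² ≥ n φ_min(S). -/

import Mathlib

/-!
The residual `r = X_j - Π_{S∖{j}} X_j` is `X_j` minus a combination of the other columns of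
`X_S`, so `r = X_S u` for some `u` with `u_j = 1`. Hence
`‖r‖² = n uᵀ Σ_{SS} u ≥ n φ_min(S) ‖u‖² ≥ n φ_min(S)`.
The remaining claims follow from Pythagoras and from `Π_S X_j = X_j`,
which makes `(Π_S - Π_{S∖{j}}) X_j β = β r`.
-/

open Matrix Finset

noncomputable section

/-- Squared Euclidean norm of a vector. -/
def sqNorm {n : ℕ} (v : Fin n → ℝ) : ℝ := ∑ i, (v i) ^ 2

/-- Gram matrix Σ = XᵀX/n. -/
def gram {n p : ℕ} (X : Matrix (Fin n) (Fin p) ℝ) : Matrix (Fin p) (Fin p) ℝ :=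
  (1 / (n : ℝ)) • (X.transpose * X)

/-- Principal submatrix Σ_{SS} of the Gram matrix. -/
def gramSub {n p : ℕ} (X : Matrix (Fin n) (Fin p) ℝ) (S : Finset (Fin p)) :
    Matrix {x // x ∈ S} {x // x ∈ S} ℝ :=
  (gram X).submatrix (fun a => a.1) (fun a => a.1)

/-- Orthogonal projection Π_S onto the span of the columns of `X` indexed by `S`. -/
def projS {n p : ℕ} (X : Matrix (Fin n) (Fin p) ℝ) (S : Finset (Fin p))
    (v : Fin n → ℝ) : Fin n → ℝ :=
  (Submodule.orthogonalProjection
      (Submodule.span ℝ ((fun j => (WithLp.equiv 2 (Fin n → ℝ)).symm (X.transpose j)) '' S))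
      ((WithLp.equiv 2 (Fin n → ℝ)).symm v) : EuclideanSpace ℝ (Fin n))

/-- The smallest eigenvalue φ_min(S) of Σ_{SS}, as the minimum of the Rayleigh quotient. -/
def phiMin {n p : ℕ} (X : Matrix (Fin n) (Fin p) ℝ) (S : Finset (Fin p)) : ℝ :=
  sInf {v | ∃ u : {x // x ∈ S} → ℝ, (∑ a, (u a) ^ 2) = 1 ∧
    v = u ⬝ᵥ (gramSub X S).mulVec u}

def euclideanCol {n p : ℕ} (X : Matrix (Fin n) (Fin p) ℝ) (k : Fin p) :
    EuclideanSpace ℝ (Fin n) :=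
  WithLp.toLp 2 (Xᵀ k)

def colSpan {n p : ℕ} (X : Matrix (Fin n) (Fin p) ℝ) (S : Finset (Fin p)) :
    Submodule ℝ (EuclideanSpace ℝ (Fin n)) :=
  Submodule.span ℝ (euclideanCol X '' S)

section

variable {n p : ℕ} (X : Matrix (Fin n) (Fin p) ℝ) (S : Finset (Fin p))

lemma projS_eq (v : Fin n → ℝ) :
    projS X S v = ((colSpan X S).starProjection (WithLp.toLp 2 v)).ofLp := rfl

lemma sqNorm_ofLp (x : EuclideanSpace ℝ (Fin n)) : sqNorm x.ofLp = ‖x‖ ^ 2 := by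
  simp [EuclideanSpace.norm_sq_eq, sqNorm]

lemma transpose_mul_self_eq_gram : Xᵀ * X = Matrix.gram ℝ (euclideanCol X) := by
  ext a b
  simp [Matrix.mul_apply, euclideanCol, EuclideanSpace.inner_toLp_toLp, dotProduct, mul_comm]

lemma gramSub_eq_smul_gram :
    gramSub X S = (1 / (n : ℝ)) • Matrix.gram ℝ (fun a : S => euclideanCol X a) := by
  rw [gramSub, _root_.gram, transpose_mul_self_eq_gram, submatrix_smul]
  rfl

lemma gramSub_posSemidef : (gramSub X S).PosSemidef := by
  rw [gramSub_eq_smul_gram]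
  exact (Matrix.posSemidef_gram ℝ _).smul (by positivity)

lemma natCast_mul_dotProduct_gramSub_mulVec (u : S → ℝ) :
    n * (u ⬝ᵥ gramSub X S *ᵥ u) = ‖∑ a, u a • euclideanCol X a‖ ^ 2 := by
  -- `gramSub` carries the junk factor `1 / 0 = 0` when `n = 0`, but then the space is trivial.
  rcases Nat.eq_zero_or_pos n with rfl | hn
  · simp [Subsingleton.elim _ (0 : EuclideanSpace ℝ (Fin 0))]
  · have hu := Matrix.star_dotProduct_gram_mulVec (𝕜 := ℝ) (fun a : S => euclideanCol X a) u u
    rw [star_trivial] at hu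
    rw [gramSub_eq_smul_gram, smul_mulVec, dotProduct_smul, hu, real_inner_self_eq_norm_sq,
      smul_eq_mul]
    field_simp

lemma dotProduct_gramSub_mulVec_nonneg (u : S → ℝ) : 0 ≤ u ⬝ᵥ gramSub X S *ᵥ u := by
  simpa using (gramSub_posSemidef X S).dotProduct_mulVec_nonneg u

lemma phiMin_nonneg : 0 ≤ phiMin X S :=
  Real.sInf_nonneg fun _ ⟨u, _, hv⟩ => hv ▸ dotProduct_gramSub_mulVec_nonneg X S u

lemma phiMin_mul_sum_sq_le (u : S → ℝ) :
    phiMin X S * ∑ a, u a ^ 2 ≤ u ⬝ᵥ gramSub X S *ᵥ u := by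
  rcases (Finset.sum_nonneg fun a _ => sq_nonneg (u a)).eq_or_lt with ht | ht
  · rw [← ht, mul_zero]
    exact dotProduct_gramSub_mulVec_nonneg X S u
  set t := ∑ a, u a ^ 2 with ht_def
  have hbdd : BddBelow {v | ∃ u : S → ℝ, (∑ a, (u a) ^ 2) = 1 ∧
      v = u ⬝ᵥ (gramSub X S).mulVec u} :=
    ⟨0, fun _ ⟨w, _, hv⟩ => hv ▸ dotProduct_gramSub_mulVec_nonneg X S w⟩
  have hunit : ∑ a, ((√t)⁻¹ * u a) ^ 2 = 1 := by
    simp_rw [mul_pow, ← Finset.mul_sum, ← ht_def, inv_pow, Real.sq_sqrt ht.le]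
    exact inv_mul_cancel₀ ht.ne'
  have hle : phiMin X S ≤ t⁻¹ * (u ⬝ᵥ gramSub X S *ᵥ u) := by
    refine csInf_le hbdd ⟨(√t)⁻¹ • u, hunit, ?_⟩
    rw [mulVec_smul, dotProduct_smul, smul_dotProduct, smul_smul, smul_eq_mul, ← mul_inv,
      Real.mul_self_sqrt ht.le]
  rwa [le_inv_mul_iff₀ ht, mul_comm] at hle

variable {X S}

lemma exists_sub_eq_sum_smul_euclideanCol {j : Fin p} (hj : j ∈ S)
    {x : EuclideanSpace ℝ (Fin n)} (hx : x ∈ colSpan X (S.erase j)) :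
    ∃ u : S → ℝ, u ⟨j, hj⟩ = 1 ∧
      euclideanCol X j - x = ∑ a, u a • euclideanCol X a := by
  obtain ⟨l, hl, rfl⟩ := Finsupp.mem_span_image_iff_linearCombination ℝ |>.mp hx
  set v : Fin p →₀ ℝ := Finsupp.single j 1 - l
  have hv : v ∈ Finsupp.supported ℝ ℝ (S : Set (Fin p)) :=
    sub_mem (Finsupp.single_mem_supported ℝ _ hj)
      (Finsupp.supported_mono (Finset.coe_subset.mpr (S.erase_subset j)) hl)
  refine ⟨fun a => v a, ?_, ?_⟩
  · simp [v, (Finsupp.mem_supported' ℝ l).mp hl j (by simp)]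
  · rw [Finset.sum_coe_sort S (fun k => v k • euclideanCol X k),
      ← Finsupp.linearCombination_apply_of_mem_supported ℝ hv, map_sub,
      Finsupp.linearCombination_single, one_smul]

theorem natCast_mul_phiMin_le_norm_sq_sub {j : Fin p} (hj : j ∈ S)
    {x : EuclideanSpace ℝ (Fin n)} (hx : x ∈ colSpan X (S.erase j)) :
    n * phiMin X S ≤ ‖euclideanCol X j - x‖ ^ 2 := by
  obtain ⟨u, hu, hux⟩ := exists_sub_eq_sum_smul_euclideanCol hj hx
  have hsum : 1 ≤ ∑ a, u a ^ 2 := by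
    simpa [hu] using Finset.single_le_sum (fun a _ => sq_nonneg (u a)) (Finset.mem_univ ⟨j, hj⟩)
  calc (n : ℝ) * phiMin X S ≤ n * (phiMin X S * ∑ a, u a ^ 2) := by
        gcongr
        exact le_mul_of_one_le_right (phiMin_nonneg X S) hsum
    _ ≤ n * (u ⬝ᵥ gramSub X S *ᵥ u) := by gcongr; exact phiMin_mul_sum_sq_le X S u
    _ = ‖euclideanCol X j - x‖ ^ 2 := by
        rw [natCast_mul_dotProduct_gramSub_mulVec, hux]

end

theorem stmt_13_general (n p : ℕ) (X : Matrix (Fin n) (Fin p) ℝ)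
    (S : Finset (Fin p)) (j : Fin p) (hj : j ∈ S) :
    (∀ c : ℝ, Real.sqrt n * Real.sqrt (phiMin X S) * |c| ≤
      Real.sqrt (sqNorm (projS X S (c • fun i => X i j)
        - projS X (S.erase j) (c • fun i => X i j)))) ∧
    sqNorm ((fun i => X i j) - projS X (S.erase j) (fun i => X i j))
      = sqNorm (fun i => X i j) - sqNorm (projS X (S.erase j) (fun i => X i j)) ∧
    (n : ℝ) * phiMin X S ≤ sqNorm ((fun i => X i j) - projS X (S.erase j) (fun i => X i j)) := by
  set x := euclideanCol X j
  set P := (colSpan X (S.erase j)).starProjection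
  have hx : (fun i => X i j) = x.ofLp := rfl
  have hres : (fun i => X i j) - projS X (S.erase j) (fun i => X i j) = (x - P x).ofLp := rfl
  have key : n * phiMin X S ≤ ‖x - P x‖ ^ 2 :=
    natCast_mul_phiMin_le_norm_sq_sub hj ((colSpan X (S.erase j)).starProjection_apply_mem x)
  refine ⟨fun c => ?_, ?_, by rwa [hres, sqNorm_ofLp]⟩
  · have hPS : (colSpan X S).starProjection x = x :=
      Submodule.starProjection_eq_self_iff.mpr (Submodule.subset_span ⟨j, hj, rfl⟩)
    have hdiff : projS X S (c • fun i => X i j) - projS X (S.erase j) (c • fun i => X i j)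
        = (c • (x - P x)).ofLp := by
      rw [hx, ← WithLp.ofLp_smul, projS_eq, projS_eq, WithLp.toLp_ofLp, map_smul, map_smul, hPS,
        smul_sub, WithLp.ofLp_sub]
    rw [hdiff, sqNorm_ofLp, Real.sqrt_sq (norm_nonneg _), norm_smul, Real.norm_eq_abs,
      mul_comm |c|, ← Real.sqrt_mul (Nat.cast_nonneg n)]
    gcongr
    exact (Real.sqrt_le_sqrt key).trans_eq (Real.sqrt_sq (norm_nonneg _))
  · have pythagoras := (colSpan X (S.erase j)).norm_sq_eq_add_norm_sq_starProjection x
    rw [Submodule.starProjection_orthogonal] at pythagoras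
    rw [hres, hx, projS_eq, WithLp.toLp_ofLp, sqNorm_ofLp, sqNorm_ofLp, sqNorm_ofLp]
    simp only [_root_.sub_apply, ContinuousLinearMap.id_apply] at pythagoras
    linarith

/-- for `j ∈ S` with Σ_{SS} invertible,
`‖(Π_S − Π_{S∖{j}})X_j β*_j‖₂ ≥ √n·φ_min(S)^{1/2}·|β*_j|`; equivalently,
`‖X_j − Π_{S∖{j}}X_j‖₂² = ‖X_j‖₂² − ‖Π_{S∖{j}}X_j‖₂² ≥ n·φ_min(S)`. -/
theorem stmt_13 (n p : ℕ) (hn : 0 < n) (X : Matrix (Fin n) (Fin p) ℝ)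
    (S : Finset (Fin p)) (s : ℕ) (hcard : S.card = s)
    (hinv : IsUnit (gramSub X S).det) (j : Fin p) (hj : j ∈ S) :
    (∀ c : ℝ, Real.sqrt n * Real.sqrt (phiMin X S) * |c| ≤
      Real.sqrt (sqNorm (projS X S (c • fun i => X i j)
        - projS X (S.erase j) (c • fun i => X i j)))) ∧
    sqNorm ((fun i => X i j) - projS X (S.erase j) (fun i => X i j))
      = sqNorm (fun i => X i j) - sqNorm (projS X (S.erase j) (fun i => X i j)) ∧
    (n : ℝ) * phiMin X S ≤ sqNorm ((fun i => X i j) - projS X (S.erase j) (fun i => X i j)) :=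
  stmt_13_general n p X S j hj
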